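/- Let G = (A ∪ B, E) be a random bipartite graph with |A| = |B| = n where each edge appears independently with probability p = ω(log n / n). Then for every fixed ε > 0, with high probability G contains (1−ε)np pairwise edge-disjoint perfect matchings. -/

import Mathlib

open scoped Classical
open Filter

/-!
Put `r = ⌈(1 - 2δ) n p⌉` for a small `δ > 0`. By Chernoff's bound and a union bound over the pairs
`(X, Y)` with `|X| + |Y| > n`, with probability at least `1 - 4 / n²` every such pair spans at
least `(1 - δ) p |X| |Y|` edges, and since `n (|X| + |Y| - n) ≤ |X| |Y|` this is the Gale–Ryser
condition `e(X, Y) ≥ r (|X| + |Y| - n)`. The condition yields an `r`-factor: in an edge-minimal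
subgraph still satisfying it every edge lies in a tight pair, tight pairs are closed under
`(X, Y), (X', Y') ↦ (X ∩ X', Y ∪ Y')` by submodularity of `e`, and this pins every degree to `r`.
An `r`-regular bipartite graph satisfies Hall's condition, so it splits into `r` disjoint perfect
matchings.
-/

open Finset Real

namespace BipartiteFactor

variable {α β : Type*}

def swapEdges (E : Finset (α × β)) : Finset (β × α) := E.map (Equiv.prodComm α β).toEmbedding

@[simp]
lemma mem_swapEdges {E : Finset (α × β)} {e : β × α} : e ∈ swapEdges E ↔ e.swap ∈ E := by
  simp [swapEdges, Finset.mem_map_equiv]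

lemma card_filter_swapEdges_fst [DecidableEq β] {E : Finset (α × β)} (b : β) :
    #{e ∈ swapEdges E | e.1 = b} = #{e ∈ E | e.2 = b} :=
  card_bij' (fun e _ => e.swap) (fun e _ => e.swap) (by simp +contextual) (by simp +contextual)
    (by simp) (by simp)

variable [DecidableEq α] [DecidableEq β]

def edgesBetween (E : Finset (α × β)) (X : Finset α) (Y : Finset β) : ℕ := #(E ∩ X ×ˢ Y)

/-- The Gale–Ryser condition for the existence of an `r`-factor when both parts have size `n`. -/
def GaleRyserCondition (n r : ℕ) (E : Finset (α × β)) : Prop :=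
  ∀ X Y, (r : ℤ) * (#X + #Y - n) ≤ edgesBetween E X Y

def IsTight (n r : ℕ) (E : Finset (α × β)) (X : Finset α) (Y : Finset β) : Prop :=
  (edgesBetween E X Y : ℤ) = r * (#X + #Y - n)

def IsBiregular (r : ℕ) (E : Finset (α × β)) : Prop :=
  (∀ a, #{e ∈ E | e.1 = a} = r) ∧ ∀ b, #{e ∈ E | e.2 = b} = r

def HasDisjointPerfectMatchings (k : ℝ) (E : Finset (α × β)) : Prop :=
  ∃ m : ℕ, k ≤ m ∧ ∃ M : Fin m → Finset (α × β),
    (∀ i, M i ⊆ E ∧ IsBiregular 1 (M i)) ∧ Pairwise fun i j => Disjoint (M i) (M j)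

variable {n r : ℕ} {E : Finset (α × β)}

lemma edgesBetween_swapEdges (X : Finset α) (Y : Finset β) :
    edgesBetween (swapEdges E) Y X = edgesBetween E X Y :=
  card_bij' (fun e _ => e.swap) (fun e _ => e.swap) (by simp +contextual) (by simp +contextual)
    (by simp) (by simp)

lemma GaleRyserCondition.swap (hE : GaleRyserCondition n r E) :
    GaleRyserCondition n r (swapEdges E) := fun Y X => by
  rw [edgesBetween_swapEdges, add_comm (#Y : ℤ)]
  exact hE X Y

lemma IsTight.swap {X : Finset α} {Y : Finset β} (h : IsTight n r E X Y) :
    IsTight n r (swapEdges E) Y X := by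
  rw [IsTight, edgesBetween_swapEdges, h]
  ring

lemma edgesBetween_inter_union_add_le (E : Finset (α × β)) (X X' : Finset α) (Y Y' : Finset β) :
    edgesBetween E (X ∩ X') (Y ∪ Y') + edgesBetween E (X ∪ X') (Y ∩ Y') ≤
      edgesBetween E X Y + edgesBetween E X' Y' := by
  simp only [edgesBetween, ← filter_mem_eq_inter, card_filter, ← sum_add_distrib]
  refine sum_le_sum fun e _ => ?_
  by_cases h1 : e.1 ∈ X <;> by_cases h2 : e.1 ∈ X' <;> by_cases h3 : e.2 ∈ Y <;>
    by_cases h4 : e.2 ∈ Y' <;> simp [h1, h2, h3, h4]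

lemma IsTight.inter_union (hE : GaleRyserCondition n r E) {X X' : Finset α} {Y Y' : Finset β}
    (h : IsTight n r E X Y) (h' : IsTight n r E X' Y') :
    IsTight n r E (X ∩ X') (Y ∪ Y') := by
  have hsub : (edgesBetween E (X ∩ X') (Y ∪ Y') : ℤ) + edgesBetween E (X ∪ X') (Y ∩ Y') ≤
      edgesBetween E X Y + edgesBetween E X' Y' := by
    exact_mod_cast edgesBetween_inter_union_add_le E X X' Y Y'
  have hX : (#(X ∪ X') : ℤ) + #(X ∩ X') = #X + #X' := by exact_mod_cast card_union_add_card_inter X X'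
  have hY : (#(Y ∪ Y') : ℤ) + #(Y ∩ Y') = #Y + #Y' := by exact_mod_cast card_union_add_card_inter Y Y'
  have h₁ := hE (X ∩ X') (Y ∪ Y')
  have h₂ := hE (X ∪ X') (Y ∩ Y')
  unfold IsTight at *
  nlinarith

lemma exists_isTight_of_not_galeRyserCondition_erase (hE : GaleRyserCondition n r E)
    {f : α × β} (hf : f ∈ E) (h : ¬ GaleRyserCondition n r (E.erase f)) :
    ∃ X Y, IsTight n r E X Y ∧ f.1 ∈ X ∧ f.2 ∈ Y := by
  simp only [GaleRyserCondition, not_forall, not_le] at h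
  obtain ⟨X, Y, hlt⟩ := h
  rw [edgesBetween, erase_inter] at hlt
  have hfXY : f ∈ X ×ˢ Y := by
    by_contra hf'
    rw [erase_eq_of_notMem (fun h => hf' (mem_inter.1 h).2)] at hlt
    exact (hE X Y).not_gt hlt
  rw [card_erase_of_mem (mem_inter.2 ⟨hf, hfXY⟩)] at hlt
  have hpos : 0 < edgesBetween E X Y := card_pos.2 ⟨f, mem_inter.2 ⟨hf, hfXY⟩⟩
  refine ⟨X, Y, le_antisymm ?_ (hE X Y), (mem_product.1 hfXY).1, (mem_product.1 hfXY).2⟩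
  rw [edgesBetween] at hpos ⊢
  push_cast [Nat.cast_sub hpos] at hlt
  omega

lemma edgesBetween_singleton_univ [Fintype β] (a : α) :
    edgesBetween E {a} univ = #{e ∈ E | e.1 = a} := by
  rw [edgesBetween, ← filter_mem_eq_inter]
  exact congrArg card (filter_congr fun e _ => by
    simp only [mem_product, mem_singleton, mem_univ, and_true])

lemma GaleRyserCondition.le_card_filter_fst [Fintype β] (hβ : Fintype.card β = n)
    (hE : GaleRyserCondition n r E) (a : α) : r ≤ #{e ∈ E | e.1 = a} := by
  have := hE {a} univ
  rw [edgesBetween_singleton_univ, card_singleton, card_univ, hβ] at this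
  omega

lemma edgesBetween_erase_add_card_filter_fst_le {X : Finset α} {Y : Finset β} {a : α}
    (ha : a ∈ X) (hY : ∀ e ∈ E, e.1 = a → e.2 ∈ Y) :
    edgesBetween E (X.erase a) Y + #{e ∈ E | e.1 = a} ≤ edgesBetween E X Y := by
  rw [edgesBetween, ← card_union_of_disjoint]
  · refine card_le_card (union_subset ?_ fun e he => ?_)
    · exact inter_subset_inter_left (product_subset_product_left (erase_subset a X))
    · obtain ⟨heE, rfl⟩ := mem_filter.1 he
      exact mem_inter.2 ⟨heE, mem_product.2 ⟨ha, hY e heE rfl⟩⟩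
  · refine disjoint_left.2 fun e he he' => ?_
    exact (mem_erase.1 (mem_product.1 (mem_inter.1 he).2).1).1 (mem_filter.1 he').2

lemma exists_isTight_of_forall_isTight (hE : GaleRyserCondition n r E)
    (htight : ∀ f ∈ E, ∃ X Y, IsTight n r E X Y ∧ f.1 ∈ X ∧ f.2 ∈ Y) {a : α}
    {S : Finset (α × β)} (hSE : S ⊆ {e ∈ E | e.1 = a}) (hS : S.Nonempty) :
    ∃ X Y, IsTight n r E X Y ∧ a ∈ X ∧ ∀ e ∈ S, e.2 ∈ Y := by
  induction hS using Finset.Nonempty.cons_induction with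
  | singleton e =>
    obtain ⟨heE, rfl⟩ := mem_filter.1 (hSE (mem_singleton_self e))
    obtain ⟨X, Y, hT, hX, hY⟩ := htight e heE
    exact ⟨X, Y, hT, hX, by simpa using hY⟩
  | cons e S he hS ih =>
    obtain ⟨X, Y, hT, haX, hSY⟩ := ih ((subset_cons he).trans hSE)
    obtain ⟨heE, rfl⟩ := mem_filter.1 (hSE (mem_cons_self e S))
    obtain ⟨X', Y', hT', haX', heY'⟩ := htight e heE
    refine ⟨X ∩ X', Y ∪ Y', hT.inter_union hE hT', mem_inter.2 ⟨haX, haX'⟩, ?_⟩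
    simp only [mem_cons, forall_eq_or_imp, mem_union]
    exact ⟨Or.inr heY', fun e he => Or.inl (hSY e he)⟩

lemma card_filter_fst_le_of_forall_isTight (hE : GaleRyserCondition n r E)
    (htight : ∀ f ∈ E, ∃ X Y, IsTight n r E X Y ∧ f.1 ∈ X ∧ f.2 ∈ Y) (a : α) :
    #{e ∈ E | e.1 = a} ≤ r := by
  by_contra! hdeg
  obtain ⟨X, Y, hT, haX, hY⟩ :=
    exists_isTight_of_forall_isTight hE htight (a := a) subset_rfl (card_pos.1 (by omega))
  have hle := edgesBetween_erase_add_card_filter_fst_le haX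
    (fun e he hea => hY e (mem_filter.2 ⟨he, hea⟩))
  have hGR := hE (X.erase a) Y
  rw [card_erase_of_mem haX] at hGR
  have hX : 1 ≤ #X := card_pos.2 ⟨a, haX⟩
  unfold IsTight at hT
  push_cast [Nat.cast_sub hX] at hGR
  have : (r : ℤ) < #{e ∈ E | e.1 = a} := by exact_mod_cast hdeg
  have : ((edgesBetween E (X.erase a) Y : ℕ) : ℤ) + #{e ∈ E | e.1 = a} ≤ edgesBetween E X Y := by
    exact_mod_cast hle
  nlinarith

theorem GaleRyserCondition.exists_isBiregular_subset [Fintype α] [Fintype β]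
    (hα : Fintype.card α = n) (hβ : Fintype.card β = n) (hE : GaleRyserCondition n r E) :
    ∃ F ⊆ E, IsBiregular r F := by
  induction E using Finset.strongInduction with
  | _ E ih =>
  by_cases hrem : ∃ f ∈ E, GaleRyserCondition n r (E.erase f)
  · obtain ⟨f, hf, hE'⟩ := hrem
    obtain ⟨F, hFE, hF⟩ := ih _ (erase_ssubset hf) hE'
    exact ⟨F, hFE.trans (erase_subset f E), hF⟩
  · push Not at hrem
    have htight := fun f hf => exists_isTight_of_not_galeRyserCondition_erase hE hf (hrem f hf)
    have htight' : ∀ f ∈ swapEdges E, ∃ Y X, IsTight n r (swapEdges E) Y X ∧ f.1 ∈ Y ∧ f.2 ∈ X := by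
      intro f hf
      obtain ⟨X, Y, hT, hX, hY⟩ := htight _ (mem_swapEdges.1 hf)
      exact ⟨Y, X, hT.swap, hY, hX⟩
    refine ⟨E, subset_rfl, fun a => ?_, fun b => ?_⟩
    · exact le_antisymm (card_filter_fst_le_of_forall_isTight hE htight a)
        (hE.le_card_filter_fst hβ a)
    · rw [← card_filter_swapEdges_fst]
      exact le_antisymm (card_filter_fst_le_of_forall_isTight hE.swap htight' b)
        (hE.swap.le_card_filter_fst hα b)

lemma card_filter_mem_eq_card_mul {γ δ : Type*} [DecidableEq δ] {F : Finset γ} {f : γ → δ}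
    (hF : ∀ a, #{e ∈ F | f e = a} = r) (s : Finset δ) : #{e ∈ F | f e ∈ s} = #s * r := by
  rw [card_eq_sum_card_fiberwise (s := {e ∈ F | f e ∈ s}) (t := s) fun e he => (mem_filter.1 he).2,
    sum_congr rfl fun a ha => ?_, sum_const, smul_eq_mul]
  rw [filter_filter, ← hF a]
  exact congrArg card (filter_congr fun e _ => ⟨fun h => h.2, fun h => ⟨h ▸ ha, h⟩⟩)

lemma IsBiregular.card_eq [Fintype α] [Fintype β] {F : Finset (α × β)} (hr : 0 < r)
    (hF : IsBiregular r F) : Fintype.card α = Fintype.card β := by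
  have hα := card_filter_mem_eq_card_mul hF.1 univ
  have hβ := card_filter_mem_eq_card_mul hF.2 univ
  simp only [mem_univ, filter_true, card_univ] at hα hβ
  exact Nat.eq_of_mul_eq_mul_right hr (hα.symm.trans hβ)

lemma IsBiregular.exists_equiv [Fintype α] [Fintype β] {F : Finset (α × β)} (hr : 0 < r)
    (hF : IsBiregular r F) : ∃ g : α ≃ β, ∀ a, (a, g a) ∈ F := by
  set nbhd : α → Finset β := fun a => {e ∈ F | e.1 = a}.image Prod.snd
  have hall : ∀ s : Finset α, #s ≤ #(s.biUnion nbhd) := by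
    intro s
    have hsub : {e ∈ F | e.1 ∈ s} ⊆ {e ∈ F | e.2 ∈ s.biUnion nbhd} := by
      intro e he
      obtain ⟨heF, hes⟩ := mem_filter.1 he
      exact mem_filter.2 ⟨heF, mem_biUnion.2 ⟨e.1, hes, mem_image.2 ⟨e, by simp [heF], rfl⟩⟩⟩
    have := card_le_card hsub
    rw [card_filter_mem_eq_card_mul hF.1, card_filter_mem_eq_card_mul hF.2] at this
    exact Nat.le_of_mul_le_mul_right this hr
  obtain ⟨g, hinj, hg⟩ := (all_card_le_biUnion_card_iff_exists_injective nbhd).1 hall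
  have hbij : Function.Bijective g :=
    (Fintype.bijective_iff_injective_and_card g).2 ⟨hinj, hF.card_eq hr⟩
  refine ⟨Equiv.ofBijective g hbij, fun a => ?_⟩
  obtain ⟨e, he, hea⟩ := mem_image.1 (hg a)
  obtain ⟨heF, rfl⟩ := mem_filter.1 he
  simpa [← hea] using heF

lemma isBiregular_one_filter_apply_eq {F : Finset (α × β)} (g : α ≃ β)
    (hg : ∀ a, (a, g a) ∈ F) : IsBiregular 1 {e ∈ F | g e.1 = e.2} := by
  refine ⟨fun a => card_eq_one.2 ⟨(a, g a), ?_⟩, fun b => card_eq_one.2 ⟨(g.symm b, b), ?_⟩⟩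
  · ext e
    simp only [mem_filter, mem_singleton]
    constructor
    · rintro ⟨⟨-, h⟩, rfl⟩
      exact Prod.ext rfl h.symm
    · rintro rfl
      exact ⟨⟨hg a, rfl⟩, rfl⟩
  · ext e
    simp only [mem_filter, mem_singleton]
    constructor
    · rintro ⟨⟨-, h⟩, rfl⟩
      exact Prod.ext (by simp [← h]) rfl
    · rintro rfl
      exact ⟨⟨by simpa using hg (g.symm b), by simp⟩, rfl⟩

lemma IsBiregular.sdiff {s : ℕ} {F M : Finset (α × β)} (hF : IsBiregular (r + s) F)
    (hM : IsBiregular s M) (hMF : M ⊆ F) : IsBiregular r (F \ M) := by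
  have hfilter (p : α × β → Prop) [DecidablePred p] :
      {e ∈ F \ M | p e} = {e ∈ F | p e} \ {e ∈ M | p e} := by
    ext e
    simp only [mem_filter, Finset.mem_sdiff]
    tauto
  refine ⟨fun a => ?_, fun b => ?_⟩
  · rw [hfilter, card_sdiff_of_subset (filter_subset_filter _ hMF), hF.1, hM.1]
    omega
  · rw [hfilter, card_sdiff_of_subset (filter_subset_filter _ hMF), hF.2, hM.2]
    omega

theorem IsBiregular.exists_disjoint_perfect_matchings [Fintype α] [Fintype β]
    {F : Finset (α × β)} (hF : IsBiregular r F) :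
    ∃ M : Fin r → Finset (α × β), (∀ i, M i ⊆ F ∧ IsBiregular 1 (M i)) ∧
      Pairwise fun i j => Disjoint (M i) (M j) := by
  induction r generalizing F with
  | zero => exact ⟨Fin.elim0, fun i => i.elim0, fun i => i.elim0⟩
  | succ r ih =>
    obtain ⟨g, hg⟩ := hF.exists_equiv r.succ_pos
    set M₀ := {e ∈ F | g e.1 = e.2}
    have hM₀ := isBiregular_one_filter_apply_eq g hg
    obtain ⟨M, hM, hdisj⟩ := ih (hF.sdiff hM₀ (filter_subset _ F))
    refine ⟨Fin.cons M₀ M, Fin.cases ⟨filter_subset _ F, hM₀⟩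
      fun i => ⟨(hM i).1.trans sdiff_subset, (hM i).2⟩, ?_⟩
    have hM₀M : ∀ i, Disjoint M₀ (M i) := fun i =>
      disjoint_of_subset_right (hM i).1 disjoint_sdiff
    intro i j hij
    cases i using Fin.cases <;> cases j using Fin.cases
    · exact absurd rfl hij
    · exact hM₀M _
    · exact (hM₀M _).symm
    · exact hdisj fun h => hij (congrArg Fin.succ h)

theorem GaleRyserCondition.hasDisjointPerfectMatchings [Fintype α] [Fintype β]
    (hα : Fintype.card α = n) (hβ : Fintype.card β = n) (hE : GaleRyserCondition n r E)
    {k : ℝ} (hk : k ≤ r) : HasDisjointPerfectMatchings k E := by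
  obtain ⟨F, hFE, hF⟩ := hE.exists_isBiregular_subset hα hβ
  obtain ⟨M, hM, hdisj⟩ := hF.exists_disjoint_perfect_matchings
  exact ⟨r, hk, M, fun i => ⟨(hM i).1.trans hFE, (hM i).2⟩, hdisj⟩

end BipartiteFactor

section BinomialRandomSubset

variable {ι : Type*} [Fintype ι]

def binomialWeight (q : ℝ) (E : Finset ι) : ℝ := q ^ #E * (1 - q) ^ (Fintype.card ι - #E)

noncomputable def binomialProb (q : ℝ) (P : Finset ι → Prop) : ℝ :=
  ∑ E : Finset ι, binomialWeight q E * if P E then 1 else 0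

variable {q : ℝ}

lemma binomialWeight_nonneg (hq0 : 0 ≤ q) (hq1 : q ≤ 1) (E : Finset ι) :
    0 ≤ binomialWeight q E :=
  mul_nonneg (pow_nonneg hq0 _) (pow_nonneg (sub_nonneg.2 hq1) _)

lemma binomialProb_mono (hq0 : 0 ≤ q) (hq1 : q ≤ 1) {P Q : Finset ι → Prop}
    (hPQ : ∀ E, P E → Q E) : binomialProb q P ≤ binomialProb q Q := by
  refine sum_le_sum fun E _ => mul_le_mul_of_nonneg_left ?_ (binomialWeight_nonneg hq0 hq1 E)
  by_cases hP : P E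
  · simp [hP, hPQ E hP]
  · simp only [hP, if_false]
    split_ifs <;> norm_num

lemma binomialProb_true (q : ℝ) : binomialProb q (fun _ : Finset ι => True) = 1 := by
  simp [binomialProb, binomialWeight, Fintype.sum_pow_mul_eq_add_pow]

lemma binomialProb_le_one (hq0 : 0 ≤ q) (hq1 : q ≤ 1) (P : Finset ι → Prop) :
    binomialProb q P ≤ 1 :=
  (binomialProb_mono hq0 hq1 fun _ _ => trivial).trans_eq (binomialProb_true (ι := ι) q)

lemma binomialProb_not (q : ℝ) (P : Finset ι → Prop) :
    binomialProb q (fun E => ¬ P E) = 1 - binomialProb q P := by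
  rw [eq_sub_iff_add_eq, ← binomialProb_true (ι := ι) q, binomialProb, binomialProb, binomialProb,
    ← sum_add_distrib]
  refine sum_congr rfl fun E _ => ?_
  by_cases hP : P E <;> simp [hP]

lemma binomialProb_exists_le_sum {κ : Type*} (I : Finset κ) (Q : κ → Finset ι → Prop)
    (hq0 : 0 ≤ q) (hq1 : q ≤ 1) :
    binomialProb q (fun E => ∃ i ∈ I, Q i E) ≤ ∑ i ∈ I, binomialProb q (Q i) := by
  unfold binomialProb
  rw [sum_comm]
  refine sum_le_sum fun E _ => ?_
  rw [← mul_sum]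
  refine mul_le_mul_of_nonneg_left ?_ (binomialWeight_nonneg hq0 hq1 E)
  split_ifs with h
  · obtain ⟨i, hi, hQ⟩ := h
    refine le_trans ?_ (single_le_sum (fun j _ => ?_) hi)
    · simp [hQ]
    · split_ifs <;> norm_num
  · exact sum_nonneg fun j _ => by split_ifs <;> norm_num

lemma sum_binomialWeight_mul_pow [DecidableEq ι] (q c : ℝ) (S : Finset ι) :
    ∑ E : Finset ι, binomialWeight q E * c ^ #(E ∩ S) = (q * c + (1 - q)) ^ #S := by
  have hprod : ∏ i, (q * (if i ∈ S then c else 1) + (1 - q)) = (q * c + (1 - q)) ^ #S := by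
    have hfactor : ∀ i, q * (if i ∈ S then c else 1) + (1 - q) =
        if i ∈ S then q * c + (1 - q) else 1 := fun i => by split_ifs <;> ring
    rw [prod_congr rfl fun i _ => hfactor i, prod_ite_mem, univ_inter, prod_const]
  rw [← hprod, prod_add, ← powerset_univ]
  refine sum_congr rfl fun E hE => ?_
  rw [binomialWeight, prod_mul_distrib, prod_const, prod_ite_mem, prod_const, prod_const,
    card_sdiff_of_subset (mem_powerset.1 hE), card_univ]
  ring

lemma mul_exp_neg_add_one_sub_le (hq0 : 0 ≤ q) {t : ℝ} (ht0 : 0 ≤ t) (ht1 : t ≤ 1) :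
    q * exp (-t) + (1 - q) ≤ exp (-(q * t * (1 - t))) := by
  have h := abs_exp_sub_one_sub_id_le (x := -t) (by rwa [abs_neg, abs_of_nonneg ht0])
  have hexp : exp (-t) ≤ 1 - t + t ^ 2 := by linarith [(abs_le.1 h).2, neg_sq t]
  nlinarith [add_one_le_exp (-(q * t * (1 - t))), mul_le_mul_of_nonneg_left hexp hq0]

/-- Chernoff's lower-tail bound for the binomially distributed `#(E ∩ S)`, of mean `q * #S`. -/
theorem binomialProb_card_inter_lt_le [DecidableEq ι] (hq0 : 0 ≤ q) (hq1 : q ≤ 1) {δ : ℝ}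
    (hδ0 : 0 ≤ δ) (hδ2 : δ ≤ 2) (S : Finset ι) :
    binomialProb q (fun E => #(E ∩ S) < (1 - δ) * q * #S) ≤ exp (-(δ ^ 2 * q * #S / 4)) := by
  set t := δ / 2 with ht
  have ht0 : 0 ≤ t := by positivity
  set A := exp (t * ((1 - δ) * q * #S))
  -- exponential Markov inequality with parameter `t`
  have hmarkov : ∀ E : Finset ι, (if #(E ∩ S) < (1 - δ) * q * #S then (1 : ℝ) else 0) ≤
      A * exp (-t) ^ #(E ∩ S) := by
    intro E
    split_ifs with h
    · rw [← exp_nat_mul, ← exp_add, one_le_exp_iff]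
      nlinarith [mul_le_mul_of_nonneg_left h.le ht0]
    · positivity
  calc binomialProb q (fun E => #(E ∩ S) < (1 - δ) * q * #S)
      ≤ ∑ E : Finset ι, binomialWeight q E * (A * exp (-t) ^ #(E ∩ S)) :=
        sum_le_sum fun E _ =>
          mul_le_mul_of_nonneg_left (hmarkov E) (binomialWeight_nonneg hq0 hq1 E)
    _ = A * (q * exp (-t) + (1 - q)) ^ #S := by
        rw [← sum_binomialWeight_mul_pow, mul_sum]
        exact sum_congr rfl fun E _ => by ring
    _ ≤ A * exp (-(q * t * (1 - t))) ^ #S := by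
        gcongr
        exact mul_exp_neg_add_one_sub_le hq0 ht0 (by linarith)
    _ = exp (-(δ ^ 2 * q * #S / 4)) := by
        rw [← exp_nat_mul, ← exp_add, ht]
        ring_nf

end BinomialRandomSubset

section Counting

lemma Nat.choose_le_pow_min (N k : ℕ) : N.choose k ≤ N ^ min k (N - k) := by
  rcases le_or_gt k N with hk | hk
  · rcases le_total k (N - k) with h | h
    · rw [min_eq_left h]
      exact Nat.choose_le_pow N k
    · rw [min_eq_right h, ← Nat.choose_symm hk]
      exact Nat.choose_le_pow N (N - k)
  · rw [Nat.choose_eq_zero_of_lt hk]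
    exact Nat.zero_le _

lemma sum_inv_pow_min_card_le (α : Type*) [Fintype α] :
    ∑ X : Finset α, ((Fintype.card α : ℝ) ^ min #X (Fintype.card α - #X))⁻¹ ≤
      Fintype.card α + 1 := by
  set N := Fintype.card α
  rw [← powerset_univ, sum_powerset_apply_card (fun m => ((N : ℝ) ^ min m (N - m))⁻¹), card_univ]
  calc _ ≤ ∑ _m ∈ range (N + 1), (1 : ℝ) := sum_le_sum fun m _ => by
          rw [nsmul_eq_mul]
          exact mul_inv_le_one_of_le₀ (by exact_mod_cast Nat.choose_le_pow_min N m) (by positivity)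
    _ = N + 1 := by simp

lemma exp_neg_mul_le_inv_pow {n x y : ℕ} {c : ℝ} (hn : 1 ≤ n) (hx : x ≤ n) (hy : y ≤ n)
    (hxy : n < x + y) (hc : 48 * log n ≤ n * c) :
    exp (-(c * x * y / 4)) ≤
      ((n : ℝ) ^ 4)⁻¹ * (((n : ℝ) ^ min x (n - x))⁻¹ * ((n : ℝ) ^ min y (n - y))⁻¹) := by
  have hn' : (1 : ℝ) ≤ n := by exact_mod_cast hn
  have hlog : 0 ≤ log n := log_nonneg hn'
  have hc0 : 0 ≤ c := by nlinarith
  rw [← mul_inv, ← mul_inv, ← pow_add, ← pow_add, ← exp_log (by positivity : (0 : ℝ) < n),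
    ← exp_nat_mul, ← exp_neg, exp_le_exp, neg_le_neg_iff]
  -- with `u = min x y`, the exponent is at most `6 u`, while `u n ≤ 2 x y`
  set u := min x y
  have hexp : 4 + (min x (n - x) + min y (n - y)) ≤ 6 * u := by omega
  have hun : u * n ≤ 2 * (x * y) := by
    rcases le_total x y with h | h
    · rw [show u = x from min_eq_left h]
      nlinarith
    · rw [show u = y from min_eq_right h]
      nlinarith
  have hexp' : ((4 + (min x (n - x) + min y (n - y)) : ℕ) : ℝ) ≤ 6 * u := by exact_mod_cast hexp
  have hun' : (u : ℝ) * n ≤ 2 * (x * y) := by exact_mod_cast hun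
  nlinarith [mul_le_mul_of_nonneg_right hexp' hlog, mul_le_mul_of_nonneg_right hun' hc0,
    mul_le_mul_of_nonneg_left hc (Nat.cast_nonneg u)]

lemma sum_exp_neg_mul_card_mul_card_le {α β : Type*} [Fintype α] [Fintype β] {n : ℕ}
    (hα : Fintype.card α = n) (hβ : Fintype.card β = n) (hn : 1 ≤ n) {c : ℝ}
    (hc : 48 * log n ≤ n * c) :
    ∑ P : Finset α × Finset β with n < #P.1 + #P.2, exp (-(c * #P.1 * #P.2 / 4)) ≤
      4 / n ^ 2 := by
  have hA := sum_inv_pow_min_card_le α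
  have hB := sum_inv_pow_min_card_le β
  rw [hα] at hA
  rw [hβ] at hB
  have hn' : (1 : ℝ) ≤ n := by exact_mod_cast hn
  calc _ ≤ ∑ P : Finset α × Finset β with n < #P.1 + #P.2,
        ((n : ℝ) ^ 4)⁻¹ * (((n : ℝ) ^ min #P.1 (n - #P.1))⁻¹ * ((n : ℝ) ^ min #P.2 (n - #P.2))⁻¹) :=
        sum_le_sum fun P hP => exp_neg_mul_le_inv_pow hn (hα ▸ card_le_univ P.1)
          (hβ ▸ card_le_univ P.2) (mem_filter.1 hP).2 hc
    _ ≤ ∑ P : Finset α × Finset β,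
        ((n : ℝ) ^ 4)⁻¹ * (((n : ℝ) ^ min #P.1 (n - #P.1))⁻¹ * ((n : ℝ) ^ min #P.2 (n - #P.2))⁻¹) :=
        sum_le_sum_of_subset_of_nonneg (filter_subset _ _) fun _ _ _ => by positivity
    _ = ((n : ℝ) ^ 4)⁻¹ * ((∑ X : Finset α, ((n : ℝ) ^ min #X (n - #X))⁻¹) *
          ∑ Y : Finset β, ((n : ℝ) ^ min #Y (n - #Y))⁻¹) := by
        rw [← mul_sum, Fintype.sum_prod_type, sum_mul_sum]
    _ ≤ ((n : ℝ) ^ 4)⁻¹ * ((n + 1) * (n + 1)) := by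
        gcongr
    _ ≤ 4 / n ^ 2 := by
        rw [inv_mul_le_iff₀ (by positivity),
          show (n : ℝ) ^ 4 * (4 / n ^ 2) = 4 * n ^ 2 by field_simp]
        nlinarith

end Counting

namespace BipartiteFactor

variable {α β : Type*} [Fintype α] [Fintype β] [DecidableEq α] [DecidableEq β] {n : ℕ}

lemma galeRyserCondition_ceil_of_forall_le_edgesBetween (hα : Fintype.card α = n)
    (hβ : Fintype.card β = n) {q δ : ℝ} (hq0 : 0 ≤ q) (hδ : δ ≤ 1 / 2)
    (hnq : 1 ≤ δ * (n * q)) {E : Finset (α × β)}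
    (hE : ∀ X Y, n < #X + #Y → (1 - δ) * q * #(X ×ˢ Y) ≤ edgesBetween E X Y) :
    GaleRyserCondition n ⌈(1 - 2 * δ) * n * q⌉₊ E := by
  intro X Y
  by_cases hXY : n < #X + #Y
  · have hXn : (#X : ℝ) ≤ n := by exact_mod_cast hα ▸ card_le_univ X
    have hYn : (#Y : ℝ) ≤ n := by exact_mod_cast hβ ▸ card_le_univ Y
    have hXY' : (n : ℝ) + 1 ≤ #X + #Y := by exact_mod_cast hXY
    have hr : (⌈(1 - 2 * δ) * n * q⌉₊ : ℝ) ≤ (1 - δ) * (n * q) := by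
      have := Nat.ceil_lt_add_one
        (mul_nonneg (mul_nonneg (by linarith) (Nat.cast_nonneg n)) hq0 : 0 ≤ (1 - 2 * δ) * n * q)
      nlinarith
    have hE' := hE X Y hXY
    rw [card_product] at hE'
    push_cast at hE'
    -- `(n - |X|) (n - |Y|) ≥ 0`
    have hprod : (n : ℝ) * (#X + #Y - n) ≤ #X * #Y := by nlinarith
    have : (⌈(1 - 2 * δ) * n * q⌉₊ : ℝ) * (#X + #Y - n) ≤ edgesBetween E X Y := by
      nlinarith [mul_le_mul_of_nonneg_right hr (by linarith : (0 : ℝ) ≤ #X + #Y - n),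
        mul_le_mul_of_nonneg_left hprod (by nlinarith : (0 : ℝ) ≤ (1 - δ) * q)]
    exact_mod_cast this
  · have : (#X : ℤ) + #Y - n ≤ 0 := by omega
    exact (mul_nonpos_of_nonneg_of_nonpos (by positivity) this).trans (by positivity)

theorem one_sub_le_binomialProb_galeRyserCondition (hα : Fintype.card α = n)
    (hβ : Fintype.card β = n) (hn : 1 ≤ n) {q δ : ℝ} (hq0 : 0 ≤ q) (hq1 : q ≤ 1) (hδ0 : 0 ≤ δ)
    (hδ : δ ≤ 1 / 2) (hnq : 1 ≤ δ * (n * q)) (hlog : 48 * log n ≤ n * (δ ^ 2 * q)) :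
    1 - 4 / n ^ 2 ≤
      binomialProb q (GaleRyserCondition n ⌈(1 - 2 * δ) * n * q⌉₊ : Finset (α × β) → Prop) := by
  set bigPairs : Finset (Finset α × Finset β) := {P | n < #P.1 + #P.2}
  have hsparse : binomialProb q (fun E => ∃ P ∈ bigPairs,
      #(E ∩ P.1 ×ˢ P.2) < (1 - δ) * q * #(P.1 ×ˢ P.2)) ≤ 4 / n ^ 2 :=
    calc _ ≤ ∑ P ∈ bigPairs, binomialProb q
          (fun E => #(E ∩ P.1 ×ˢ P.2) < (1 - δ) * q * #(P.1 ×ˢ P.2)) :=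
          binomialProb_exists_le_sum _ _ hq0 hq1
      _ ≤ ∑ P ∈ bigPairs, exp (-(δ ^ 2 * q * #P.1 * #P.2 / 4)) := sum_le_sum fun P _ => by
          refine (binomialProb_card_inter_lt_le hq0 hq1 hδ0 (by linarith) _).trans_eq ?_
          rw [card_product, Nat.cast_mul, ← mul_assoc]
      _ ≤ 4 / n ^ 2 := sum_exp_neg_mul_card_mul_card_le hα hβ hn hlog
  calc 1 - 4 / n ^ 2
      ≤ 1 - binomialProb q (fun E => ∃ P ∈ bigPairs,
          #(E ∩ P.1 ×ˢ P.2) < (1 - δ) * q * #(P.1 ×ˢ P.2)) := by linarith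
    _ = binomialProb q (fun E => ¬ ∃ P ∈ bigPairs,
          #(E ∩ P.1 ×ˢ P.2) < (1 - δ) * q * #(P.1 ×ˢ P.2)) := (binomialProb_not _ _).symm
    _ ≤ _ := binomialProb_mono hq0 hq1 fun E hE =>
        galeRyserCondition_ceil_of_forall_le_edgesBetween hα hβ hq0 hδ hnq fun X Y hXY =>
          not_lt.1 fun h => hE ⟨(X, Y), mem_filter.2 ⟨mem_univ _, hXY⟩, h⟩

theorem one_sub_le_binomialProb_hasDisjointPerfectMatchings (hα : Fintype.card α = n)
    (hβ : Fintype.card β = n) (hn : 1 ≤ n) {q δ ε : ℝ} (hq0 : 0 ≤ q) (hq1 : q ≤ 1) (hδ0 : 0 ≤ δ)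
    (hδ : δ ≤ 1 / 2) (hδε : 2 * δ ≤ ε) (hnq : 1 ≤ δ * (n * q))
    (hlog : 48 * log n ≤ n * (δ ^ 2 * q)) :
    1 - 4 / n ^ 2 ≤ binomialProb q
      (HasDisjointPerfectMatchings ((1 - ε) * n * q) : Finset (α × β) → Prop) := by
  refine (one_sub_le_binomialProb_galeRyserCondition hα hβ hn hq0 hq1 hδ0 hδ hnq hlog).trans
    (binomialProb_mono hq0 hq1 fun E hE => hE.hasDisjointPerfectMatchings hα hβ ?_)
  have := mul_nonneg (Nat.cast_nonneg n : (0 : ℝ) ≤ n) hq0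
  exact le_trans (by nlinarith) (Nat.le_ceil _)

end BipartiteFactor

lemma eventually_one_le_mul_and_log_le_of_tendsto_div_log {p : ℕ → ℝ}
    (hω : Tendsto (fun n : ℕ => p n * n / log n) atTop atTop) {δ : ℝ} (hδ0 : 0 < δ) :
    ∀ᶠ n : ℕ in atTop, 1 ≤ δ * (n * p n) ∧ 48 * log n ≤ n * (δ ^ 2 * p n) := by
  have hC (C : ℝ) : ∀ᶠ n : ℕ in atTop, C * log n ≤ n * p n := by
    filter_upwards [hω.eventually_ge_atTop C, eventually_ge_atTop 2] with n hC hn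
    rw [le_div_iff₀ (log_pos (by exact_mod_cast hn))] at hC
    linarith
  filter_upwards [hC (1 / δ), hC (48 / δ ^ 2),
    (tendsto_log_atTop.comp tendsto_natCast_atTop_atTop).eventually_ge_atTop 1] with n h₁ h₄₈ hlog
  have hlog : 1 ≤ log n := hlog
  rw [one_div, inv_mul_le_iff₀ hδ0] at h₁
  rw [div_mul_eq_mul_div, div_le_iff₀ (by positivity)] at h₄₈
  constructor <;> linarith

/-- In the random bipartite graph `B(n,n,p)` on parts of size `n` with edge
probability `p = ω(log n / n)`, for every fixed `ε > 0`, with high probability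
there are at least `(1−ε)np` pairwise edge-disjoint perfect matchings. -/
theorem stmt15 (ε : ℝ) (hε : 0 < ε) (p : ℕ → ℝ)
    (hp : ∀ n, 0 < p n ∧ p n ≤ 1)
    (hω : Tendsto (fun n : ℕ => p n * n / Real.log n) atTop atTop) :
    Tendsto (fun n : ℕ =>
      ∑ E ∈ (Finset.univ : Finset (Fin n × Fin n)).powerset,
        p n ^ E.card * (1 - p n) ^ (n * n - E.card) *
          (if ∃ m : ℕ, (1 - ε) * n * p n ≤ (m : ℝ) ∧
              ∃ M : Fin m → Finset (Fin n × Fin n),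
                (∀ i, M i ⊆ E ∧
                  (∀ a : Fin n, ((M i).filter (fun e => e.1 = a)).card = 1) ∧
                  (∀ b : Fin n, ((M i).filter (fun e => e.2 = b)).card = 1)) ∧
                (∀ i j, i ≠ j → Disjoint (M i) (M j))
            then (1 : ℝ) else 0))
      atTop (nhds 1) := by
  obtain ⟨δ, hδ0, hδ, hδε⟩ : ∃ δ : ℝ, 0 < δ ∧ δ ≤ 1 / 2 ∧ 2 * δ ≤ ε :=
    ⟨min ε 1 / 2, by positivity, by linarith [min_le_right ε 1], by linarith [min_le_left ε 1]⟩
  have hlim : Tendsto (fun n : ℕ => 1 - 4 / (n : ℝ) ^ 2) atTop (nhds 1) := by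
    simpa using tendsto_const_nhds.sub (tendsto_const_nhds.div_atTop
      ((tendsto_pow_atTop two_ne_zero).comp tendsto_natCast_atTop_atTop) : Tendsto
        (fun n : ℕ => 4 / (n : ℝ) ^ 2) atTop (nhds 0))
  refine Tendsto.congr (f₁ := fun n => binomialProb (p n)
      (BipartiteFactor.HasDisjointPerfectMatchings (α := Fin n) (β := Fin n) ((1 - ε) * n * p n)))
    (fun n => ?_) ?_
  · simp only [binomialProb, binomialWeight, BipartiteFactor.HasDisjointPerfectMatchings,
      BipartiteFactor.IsBiregular, powerset_univ, Fintype.card_prod, Fintype.card_fin]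
    rfl
  refine tendsto_of_tendsto_of_tendsto_of_le_of_le' hlim tendsto_const_nhds ?_
    (Eventually.of_forall fun n => binomialProb_le_one (hp n).1.le (hp n).2 _)
  filter_upwards [eventually_ge_atTop 1,
    eventually_one_le_mul_and_log_le_of_tendsto_div_log hω hδ0] with n hn ⟨hnq, hlog⟩
  exact BipartiteFactor.one_sub_le_binomialProb_hasDisjointPerfectMatchings (Fintype.card_fin n)
    (Fintype.card_fin n) hn (hp n).1.le (hp n).2 hδ0.le hδ hδε hnq hlog
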